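/- Let Ĝ be a group with a surjective homomorphism π: Ĝ → {±1} and kernel G, let λ̂ be a normalized π-twisted 2-cocycle on Ĝ valued in ℂˣ, and let λ be its restriction to G. Let (V, φ) be a λ-twisted representation of G and let ς ∈ Ĝ∖G be odd. Define Θ := λ̂(ς,ς) · ev_V ∘ φ(ς²): V → (V^∨)^∨, where ev_V: V → (V^∨)^∨ is the canonical evaluation map (note ς² ∈ G). Then Θ is a morphism of λ-twisted representations from (V, φ) to ((V^∨)^∨, (φ^ς)^ς); that is, Θ ∘ φ(g) = (φ^ς)^ς(g) ∘ Θ for all g ∈ G, where (φ^ς)^ς is the twisted representation on (V^∨)^∨ obtained by applying the dualization construction twice. (This is the statement that Θ^ς defines the natural transformation 1 ⇒ P^ς ∘ (P^ς)^op of the duality structure in Section 4.5 of the paper.) -/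

import Mathlib

/-! Both sides are multiples of `ev_V ∘ φ(ς²g)`. On the left, `φ(ς²) φ(g) = λ(ς²,g) φ(ς²g)`.
On the right, dualizing twice conjugates by `ς` twice, so `(φ^ς)^ς(g)` is a multiple of
`φ(ς²gς⁻²)^∨∨`; naturality of `ev_V` moves it past `ev_V`, and
`φ(ς²gς⁻²) φ(ς²) = λ(ς²gς⁻²,ς²) φ(ς²g)`. Comparing the scalars leaves
`λ(ς²,g) τ_ς(g) τ_ς(ςg⁻¹ς⁻¹) = λ(ς²gς⁻²,ς²)`. In the twisted group algebra
(`l_a l_b = λ(a,b) l_{ab}`, odd `l_a` antilinear) this says that conjugating twice by `l_ς` is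
conjugating by `l_ς l_ς = λ(ς,ς) l_{ς²}`; concretely it is a product of seven instances of the
cocycle identity. -/

/-- Conjugation `g ↦ ς g ς⁻¹` preserves the kernel of `π`. -/
def kconj {Ghat : Type*} [Group Ghat] (π : Ghat →* ℤˣ) (ς : Ghat) (g : π.ker) :
    π.ker :=
  ⟨ς * (g : Ghat) * ς⁻¹, by
    have hg : π (g : Ghat) = 1 := MonoidHom.mem_ker.mp g.2
    rw [MonoidHom.mem_ker, map_mul, map_mul, map_inv, hg, mul_one, mul_inv_cancel]⟩

/-- The square `ς²` of any element of `Ĝ` lies in the kernel of `π : Ĝ → {±1}`. -/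
def sqk {Ghat : Type*} [Group Ghat] (π : Ghat →* ℤˣ) (ς : Ghat) : π.ker :=
  ⟨ς * ς, by rw [MonoidHom.mem_ker, map_mul]; exact Int.units_mul_self (π ς)⟩

/-- The reflection-twisted transgression `τ^ref_π(λ̂)([ς]g)` of the paper:
`τ_ς(g) = λ̂(g⁻¹,g)⁻¹ · λ̂(ςg⁻¹ς⁻¹, ς) · λ̂(ς, g⁻¹)⁻¹`. -/
def tau {Ghat : Type*} [Group Ghat] (lam : Ghat → Ghat → ℂˣ) (ς g : Ghat) : ℂˣ :=
  (lam g⁻¹ g)⁻¹ * lam (ς * g⁻¹ * ς⁻¹) ς * (lam ς g⁻¹)⁻¹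

/-- The dualization construction of Section 4.5 of the paper:
`φ^ς(g) := τ_ς(g)⁻¹ · (φ(ς g⁻¹ ς⁻¹))^∨` on the dual space. -/
noncomputable def dualTw {Ghat : Type*} [Group Ghat] (π : Ghat →* ℤˣ)
    (lam : Ghat → Ghat → ℂˣ) (ς : Ghat) {V : Type*} [AddCommGroup V] [Module ℂ V]
    (φ : π.ker → (V →ₗ[ℂ] V)) (g : π.ker) :
    Module.Dual ℂ V →ₗ[ℂ] Module.Dual ℂ V :=
  (((tau lam ς (g : Ghat))⁻¹ : ℂˣ) : ℂ) • LinearMap.dualMap (φ (kconj π ς g⁻¹))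

section Cocycle

variable {Ghat : Type*} [Group Ghat]

def IsTwistedCocycle (π : Ghat →* ℤˣ) (lam : Ghat → Ghat → ℂˣ) : Prop :=
  ∀ ω₁ ω₂ ω₃ : Ghat,
    lam ω₂ ω₃ ^ ((π ω₁ : ℤˣ) : ℤ) * lam ω₁ (ω₂ * ω₃) = lam (ω₁ * ω₂) ω₃ * lam ω₁ ω₂

namespace IsTwistedCocycle

variable {π : Ghat →* ℤˣ} {lam : Ghat → Ghat → ℂˣ}

theorem of_even (h : IsTwistedCocycle π lam) {ω₁ : Ghat} (hω : π ω₁ = 1) (ω₂ ω₃ : Ghat) :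
    lam ω₂ ω₃ * lam ω₁ (ω₂ * ω₃) = lam (ω₁ * ω₂) ω₃ * lam ω₁ ω₂ := by
  simpa [hω] using h ω₁ ω₂ ω₃

theorem of_odd (h : IsTwistedCocycle π lam) {ω₁ : Ghat} (hω : π ω₁ = -1) (ω₂ ω₃ : Ghat) :
    (lam ω₂ ω₃)⁻¹ * lam ω₁ (ω₂ * ω₃) = lam (ω₁ * ω₂) ω₃ * lam ω₁ ω₂ := by
  simpa [hω] using h ω₁ ω₂ ω₃

theorem lam_one_right (h : IsTwistedCocycle π lam) (hnorm : lam 1 1 = 1) (x : Ghat) :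
    lam x 1 = 1 := by
  simpa [hnorm] using h x 1 1

theorem lam_one_left (h : IsTwistedCocycle π lam) (hnorm : lam 1 1 = 1) (x : Ghat) :
    lam 1 x = 1 := by
  simpa [hnorm] using h.of_even (map_one π) 1 x

theorem lam_self_inv_eq_lam_inv_self (h : IsTwistedCocycle π lam) (hnorm : lam 1 1 = 1)
    {t : Ghat} (ht : π t = 1) : lam t t⁻¹ = lam t⁻¹ t := by
  simpa [h.lam_one_left hnorm, h.lam_one_right hnorm] using
    h.of_even (by simp [ht] : π t⁻¹ = 1) t t⁻¹

theorem tau_mul_lam_conj (h : IsTwistedCocycle π lam) (hnorm : lam 1 1 = 1) {s t : Ghat}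
    (hs : π s = -1) (ht : π t = 1) :
    tau lam s t * lam (s * t * s⁻¹) s = lam (s * t * s⁻¹) (s * t⁻¹ * s⁻¹) * lam s t := by
  have hv : π (s * t * s⁻¹) = 1 := by simp [hs, ht]
  have hvus := h.of_even hv (s * t⁻¹ * s⁻¹) s
  have hvst := h.of_even hv s t⁻¹
  have hstt := h.of_odd hs t t⁻¹
  have hsymm := h.lam_self_inv_eq_lam_inv_self hnorm ht
  simp only [mul_assoc, inv_mul_cancel_left, mul_inv_cancel_left, mul_inv_cancel, inv_mul_cancel,
    mul_one, one_mul, h.lam_one_left hnorm, h.lam_one_right hnorm] at hvus hvst hstt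
  unfold tau
  simp only [mul_assoc]
  rw [← hsymm, hstt, ← hvus, eq_inv_mul_of_mul_eq hvst]
  ac_rfl

theorem lam_conj_conj (h : IsTwistedCocycle π lam) {s t : Ghat}
    (hs : π s = -1) (ht : π t = 1) :
    lam (s * s * t * (s * s)⁻¹) (s * s) * (lam (s * t * s⁻¹) s * lam s (s * t * s⁻¹))
      = lam (s * s) t * lam s t * lam (s * s * t * (s * s)⁻¹) s := by
  have hw : π (s * s * t * (s * s)⁻¹) = 1 := by simp [hs, ht]
  have hwss := h.of_even hw s s
  have hsvs := inv_mul_eq_iff_eq_mul.mp (h.of_odd hs (s * t * s⁻¹) s)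
  have hsst := inv_mul_eq_iff_eq_mul.mp (h.of_odd hs s t)
  simp only [mul_assoc, mul_inv_rev, inv_mul_cancel, mul_one] at hwss hsvs hsst ⊢
  apply mul_left_cancel (a := lam s s * lam (s * (s * (t * s⁻¹))) s)
  calc _ = (lam s s * lam (s * (s * (t * (s⁻¹ * s⁻¹)))) (s * s)) *
          (lam (s * (t * s⁻¹)) s * (lam (s * (s * (t * s⁻¹))) s * lam s (s * (t * s⁻¹)))) := by
        ac_rfl
    _ = (lam (s * (s * (t * s⁻¹))) s * lam (s * (s * (t * (s⁻¹ * s⁻¹)))) s) *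
          (lam s t * (lam (s * s) t * lam s s)) := by rw [hwss, ← hsvs, hsst]
    _ = _ := by ac_rfl

theorem lam_sq_mul_tau_mul_tau (h : IsTwistedCocycle π lam) (hnorm : lam 1 1 = 1) {s t : Ghat}
    (hs : π s = -1) (ht : π t = 1) :
    lam (s * s) t * tau lam s t * tau lam s (s * t⁻¹ * s⁻¹)
      = lam (s * s * t * (s * s)⁻¹) (s * s) := by
  have hu : tau lam s (s * t⁻¹ * s⁻¹) = (lam (s * t * s⁻¹) (s * t⁻¹ * s⁻¹))⁻¹ *
      lam (s * s * t * (s * s)⁻¹) s * (lam s (s * t * s⁻¹))⁻¹ := by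
    simp only [tau, mul_inv_rev, inv_inv, mul_assoc]
  rw [hu, eq_mul_inv_of_mul_eq (h.tau_mul_lam_conj hnorm hs ht),
    eq_mul_inv_of_mul_eq (h.lam_conj_conj hs ht)]
  ext
  push_cast
  field_simp

end IsTwistedCocycle

end Cocycle

section DoubleDual

variable {Ghat : Type*} [Group Ghat] (π : Ghat →* ℤˣ)

theorem kconj_kconj_inv_inv (ς : Ghat) (g : π.ker) :
    kconj π ς (kconj π ς g⁻¹)⁻¹ = kconj π (ς * ς) g := by
  ext
  simp only [kconj, InvMemClass.coe_inv]
  group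

theorem kconj_sq_mul_sqk (ς : Ghat) (g : π.ker) :
    kconj π (ς * ς) g * sqk π ς = sqk π ς * g := by
  ext
  simp [kconj, sqk, mul_assoc]

theorem dualTw_dualTw (lam : Ghat → Ghat → ℂˣ) (ς : Ghat) {V : Type*} [AddCommGroup V]
    [Module ℂ V] (φ : π.ker → (V →ₗ[ℂ] V)) (g : π.ker) :
    dualTw π lam ς (dualTw π lam ς φ) g =
      (((tau lam ς g * tau lam ς (kconj π ς g⁻¹))⁻¹ : ℂˣ) : ℂ) •
        (φ (kconj π (ς * ς) g)).dualMap.dualMap := by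
  simp only [dualTw, LinearMap.dualMap_def, map_smul, smul_smul, kconj_kconj_inv_inv, mul_inv,
    Units.val_mul]

end DoubleDual

theorem double_dual_morphism_general
    {Ghat : Type*} [Group Ghat] (π : Ghat →* ℤˣ)
    (lam : Ghat → Ghat → ℂˣ) (hnorm : lam 1 1 = 1)
    (hcoc : ∀ ω₁ ω₂ ω₃ : Ghat,
      lam ω₂ ω₃ ^ ((π ω₁ : ℤˣ) : ℤ) * lam ω₁ (ω₂ * ω₃) = lam (ω₁ * ω₂) ω₃ * lam ω₁ ω₂)
    {V : Type*} [AddCommGroup V] [Module ℂ V]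
    (φ : π.ker → (V ≃ₗ[ℂ] V))
    (hφ : ∀ g h : π.ker, (φ g).toLinearMap ∘ₗ (φ h).toLinearMap
      = ((lam (g : Ghat) (h : Ghat) : ℂˣ) : ℂ) • (φ (g * h)).toLinearMap)
    (ς : Ghat) (hς : π ς = -1) :
    ∀ g : π.ker,
      (((lam ς ς : ℂˣ) : ℂ) • (Module.Dual.eval ℂ V ∘ₗ (φ (sqk π ς)).toLinearMap)) ∘ₗ
          (φ g).toLinearMap
        = dualTw π lam ς (dualTw π lam ς (fun k => (φ k).toLinearMap)) g ∘ₗ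
            (((lam ς ς : ℂˣ) : ℂ) •
              (Module.Dual.eval ℂ V ∘ₗ (φ (sqk π ς)).toLinearMap)) := by
  intro g
  have hscalar : tau lam ς g * tau lam ς (kconj π ς g⁻¹) * lam (sqk π ς) g
      = lam (kconj π (ς * ς) g) (sqk π ς) :=
    (mul_rotate _ _ _).symm.trans (IsTwistedCocycle.lam_sq_mul_tau_mul_tau hcoc hnorm hς g.2)
  rw [dualTw_dualTw, LinearMap.smul_comp, LinearMap.comp_smul, LinearMap.smul_comp,
    ← LinearMap.comp_assoc, Module.Dual.eval_naturality, LinearMap.comp_assoc, LinearMap.comp_assoc]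
  rw [hφ, hφ, kconj_sq_mul_sqk, ← hscalar, Units.val_mul]
  simp only [LinearMap.comp_smul, smul_smul, Units.inv_mul_cancel_left]

/-- The claim of Section 4.5 of the paper that `Θ^ς := λ̂(ς,ς)·ev_V ∘ φ(ς²)` is a morphism
of `λ`-twisted representations `(V, φ) → ((V^∨)^∨, (φ^ς)^ς)`, i.e. the component of the
natural transformation `1 ⇒ P^ς ∘ (P^ς)^op` of the duality structure. -/
theorem double_dual_morphism
    {Ghat : Type*} [Group Ghat] (π : Ghat →* ℤˣ) (hπ : Function.Surjective π)
    (lam : Ghat → Ghat → ℂˣ) (hnorm : lam 1 1 = 1)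
    (hcoc : ∀ ω₁ ω₂ ω₃ : Ghat,
      lam ω₂ ω₃ ^ ((π ω₁ : ℤˣ) : ℤ) * lam ω₁ (ω₂ * ω₃) = lam (ω₁ * ω₂) ω₃ * lam ω₁ ω₂)
    {V : Type*} [AddCommGroup V] [Module ℂ V] [FiniteDimensional ℂ V]
    (φ : π.ker → (V ≃ₗ[ℂ] V))
    (hφ : ∀ g h : π.ker, (φ g).toLinearMap ∘ₗ (φ h).toLinearMap
      = ((lam (g : Ghat) (h : Ghat) : ℂˣ) : ℂ) • (φ (g * h)).toLinearMap)
    (ς : Ghat) (hς : π ς = -1) :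
    ∀ g : π.ker,
      (((lam ς ς : ℂˣ) : ℂ) • (Module.Dual.eval ℂ V ∘ₗ (φ (sqk π ς)).toLinearMap)) ∘ₗ
          (φ g).toLinearMap
        = dualTw π lam ς (dualTw π lam ς (fun k => (φ k).toLinearMap)) g ∘ₗ
            (((lam ς ς : ℂˣ) : ℂ) •
              (Module.Dual.eval ℂ V ∘ₗ (φ (sqk π ς)).toLinearMap)) :=
  double_dual_morphism_general π lam hnorm hcoc φ hφ ς hς
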